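/- Let v₁ ∈ ℝ^p be a unit vector, P₁ = v₁ ⊗ v₁, and let P̂ ∈ ℝ^{p×p} be any matrix with nuclear norm ‖P̂‖_* ≤ 1. Then ‖P̂ − P₁‖_F² ≤ 2·(1 − ⟨P̂, P₁⟩). Moreover ⟨P̂, P₁⟩ ≤ 1, and for Σ₂ a symmetric positive semidefinite matrix with Σ₂ v₁ = 0 and operator norm ‖Σ₂‖ = σ₂, one has ⟨P̂, Σ₂⟩ ≤ σ₂·(1 − ⟨P̂, P₁⟩). -/

import Mathlib

open MeasureTheory ProbabilityTheory Finset

noncomputable section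

/-- Vectors in ℝ^p. -/
abbrev Vec (p : ℕ) := Fin p → ℝ

/-- p × p real matrices. -/
abbrev Mat (p : ℕ) := Matrix (Fin p) (Fin p) ℝ

/-- Euclidean (ℓ2) norm. -/
def l2 {p : ℕ} (u : Vec p) : ℝ := Real.sqrt (∑ i, (u i) ^ 2)

/-- ℓ1 norm. -/
def l1 {p : ℕ} (u : Vec p) : ℝ := ∑ i, |u i|

/-- Euclidean inner product. -/
def dotp {p : ℕ} (u v : Vec p) : ℝ := ∑ i, u i * v i

/-- θ_s(u,v) = (‖u‖₂ + s^{-1/2}‖u‖₁)(‖v‖₂ + s^{-1/2}‖v‖₁). -/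
def theta {p : ℕ} (s : ℝ) (u v : Vec p) : ℝ :=
  (l2 u + (Real.sqrt s)⁻¹ * l1 u) * (l2 v + (Real.sqrt s)⁻¹ * l1 v)

/-- Frobenius (Hilbert–Schmidt) inner product. -/
def frob {p : ℕ} (A B : Mat p) : ℝ := ∑ i, ∑ j, A i j * B i j

/-- Frobenius norm. -/
def frobNorm {p : ℕ} (A : Mat p) : ℝ := Real.sqrt (frob A A)

/-- The mixed atomic norm ‖B‖_{Γ_s}. -/
def mixedNorm {p : ℕ} (s : ℝ) (B : Mat p) : ℝ :=
  sInf { t | ∃ (K : ℕ) (u v : Fin K → Vec p),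
    B = ∑ k, Matrix.vecMulVec (u k) (v k) ∧ t = ∑ k, theta s (u k) (v k) }

/-- Dual norm of the mixed atomic norm. -/
def dualMixedNorm {p : ℕ} (s : ℝ) (Z : Mat p) : ℝ :=
  sSup { t | ∃ B : Mat p, mixedNorm s B ≤ 1 ∧ t = frob Z B }

/-- A vector is `s`-sparse if it has at most `s` nonzero entries. -/
def IsSparse {p : ℕ} (s : ℕ) (u : Vec p) : Prop := {i | u i ≠ 0}.ncard ≤ s

/-- Nuclear norm of a real matrix: the sum of its singular values. -/
def nuclearNorm {p : ℕ} (A : Mat p) : ℝ :=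
  ∑ i, Real.sqrt ((Matrix.isHermitian_iff_isSymm.mpr (Matrix.isSymm_transpose_mul_self A)).eigenvalues i)

/-- Operator (spectral) norm of a real matrix. -/
def opNorm {p : ℕ} (A : Mat p) : ℝ :=
  sSup { t | ∃ u v : Vec p, l2 u ≤ 1 ∧ l2 v ≤ 1 ∧ t = dotp (A.mulVec u) v }

/-- `X` has sub-Gaussian (ψ₂) norm at most `K`: `E exp(X²/K²) ≤ 2`. -/
def HasSubgaussianNorm {Ω : Type*} [MeasurableSpace Ω] (μ : Measure Ω) (X : Ω → ℝ) (K : ℝ) :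
    Prop := ∫ ω, Real.exp ((X ω) ^ 2 / K ^ 2) ∂μ ≤ 2

/-- `W` is a subgradient of the mixed atomic norm `‖·‖_{Γ_s}` at `B`. -/
def InSubdiff {p : ℕ} (s : ℝ) (W B : Mat p) : Prop :=
  ∀ C : Mat p, mixedNorm s B + frob W (C - B) ≤ mixedNorm s C

/-! All three claims come from trace duality `⟨X, A⟩ ≤ ‖A‖_op ‖X‖_*` and from `‖X‖_F ≤ ‖X‖_*`, which
are read off by expanding in an orthonormal eigenbasis `eᵢ` of `XᵀX`, where `‖X eᵢ‖` are the
singular values of `X`. The first claim is then the expansion of the square, the second is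
duality against `A = P₁`, and the third is duality against `A = Σ₂ + σ₂ P₁`, whose operator norm
is `σ₂` because `Σ₂` acts on `v₁^⊥` and `σ₂ P₁` on `span v₁`. -/

open Matrix

theorem Matrix.trace_eq_sum_dotProduct_mulVec {n ι : Type*} [Fintype n] [DecidableEq n]
    [Fintype ι] (M : Matrix n n ℝ) (b : OrthonormalBasis ι ℝ (EuclideanSpace ℝ n)) :
    M.trace = ∑ i, ⇑(b i) ⬝ᵥ M *ᵥ ⇑(b i) := by
  rw [← Matrix.trace_toLin_eq M (PiLp.basisFun 2 ℝ n), ← Matrix.toLpLin_eq_toLin,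
    LinearMap.trace_eq_sum_inner _ b]
  simp [EuclideanSpace.inner_eq_star_dotProduct, Matrix.toLpLin_apply, dotProduct_comm]

theorem Matrix.isHermitian_transpose_mul_self {n : Type*} [Fintype n] (X : Matrix n n ℝ) :
    (Xᵀ * X).IsHermitian :=
  isHermitian_iff_isSymm.mpr (isSymm_transpose_mul_self X)

section

variable {p : ℕ}

theorem dotp_eq_dotProduct (u v : Vec p) : dotp u v = u ⬝ᵥ v := rfl

theorem l2_eq_norm (u : Vec p) : l2 u = ‖WithLp.toLp 2 u‖ := by
  simp [l2, EuclideanSpace.norm_eq]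

theorem dotProduct_eq_inner (u v : Vec p) :
    u ⬝ᵥ v = inner ℝ (WithLp.toLp 2 u) (WithLp.toLp 2 v) := by
  simp [EuclideanSpace.inner_eq_star_dotProduct, dotProduct_comm]

theorem l2_nonneg (u : Vec p) : 0 ≤ l2 u := Real.sqrt_nonneg _

theorem l2_zero : l2 (0 : Vec p) = 0 := by simp [l2]

theorem l2_pos {u : Vec p} (hu : u ≠ 0) : 0 < l2 u := by
  rw [l2_eq_norm, norm_pos_iff]
  exact fun h => hu (congrArg WithLp.ofLp h)

theorem l2_sq (u : Vec p) : l2 u ^ 2 = u ⬝ᵥ u := by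
  rw [l2_eq_norm, dotProduct_eq_inner, real_inner_self_eq_norm_sq]

theorem l2_smul (c : ℝ) (u : Vec p) : l2 (c • u) = |c| * l2 u := by
  rw [l2_eq_norm, l2_eq_norm, WithLp.toLp_smul, norm_smul, Real.norm_eq_abs]

theorem abs_dotProduct_le_l2_mul_l2 (u v : Vec p) : |u ⬝ᵥ v| ≤ l2 u * l2 v := by
  rw [dotProduct_eq_inner, l2_eq_norm, l2_eq_norm]
  exact abs_real_inner_le_norm _ _

theorem dotProduct_le_l2_mul_l2 (u v : Vec p) : u ⬝ᵥ v ≤ l2 u * l2 v :=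
  (le_abs_self _).trans (abs_dotProduct_le_l2_mul_l2 u v)

theorem l2_le_of_dotProduct_self_le {u : Vec p} {c : ℝ} (hc : 0 ≤ c) (h : u ⬝ᵥ u ≤ c ^ 2) :
    l2 u ≤ c :=
  (pow_le_pow_iff_left₀ (l2_nonneg u) hc two_ne_zero).mp (l2_sq u ▸ h)

theorem l2_orthonormalBasis {ι : Type*} [Fintype ι]
    (b : OrthonormalBasis ι ℝ (EuclideanSpace ℝ (Fin p))) (i : ι) : l2 ⇑(b i) = 1 := by
  rw [l2_eq_norm, WithLp.toLp_ofLp, b.norm_eq_one]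

theorem l2_vecMulVec_mulVec_le (v w u : Vec p) :
    l2 (vecMulVec v w *ᵥ u) ≤ l2 v * l2 w * l2 u := by
  rw [vecMulVec_mulVec, op_smul_eq_smul, l2_smul, mul_comm (l2 v), mul_assoc, mul_comm (l2 v),
    ← mul_assoc]
  exact mul_le_mul_of_nonneg_right (abs_dotProduct_le_l2_mul_l2 w u) (l2_nonneg v)

theorem frob_eq_trace (A B : Mat p) : frob A B = (Aᵀ * B).trace := by
  simp only [frob, trace, diag_apply, mul_apply, transpose_apply]
  exact sum_comm

theorem frob_add_right (X A B : Mat p) : frob X (A + B) = frob X A + frob X B := by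
  simp only [frob_eq_trace, Matrix.mul_add, trace_add]

theorem frob_smul_right (c : ℝ) (X A : Mat p) : frob X (c • A) = c * frob X A := by
  simp only [frob_eq_trace, Matrix.mul_smul, trace_smul, smul_eq_mul]

theorem frob_self_nonneg (A : Mat p) : 0 ≤ frob A A :=
  sum_nonneg fun _ _ => sum_nonneg fun _ _ => mul_self_nonneg _

theorem frobNorm_sub_sq (A B : Mat p) :
    frobNorm (A - B) ^ 2 = frob A A - 2 * frob A B + frob B B := by
  rw [frobNorm, Real.sq_sqrt (frob_self_nonneg _)]
  simp only [frob, Matrix.sub_apply, mul_sum, ← sum_sub_distrib, ← sum_add_distrib]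
  exact sum_congr rfl fun _ _ => sum_congr rfl fun _ _ => by ring

theorem frob_vecMulVec_self (v : Vec p) :
    frob (vecMulVec v v) (vecMulVec v v) = (v ⬝ᵥ v) ^ 2 := by
  simp only [frob, vecMulVec_apply, dotProduct, sq, sum_mul_sum]
  exact sum_congr rfl fun _ _ => sum_congr rfl fun _ _ => by ring

theorem frob_eq_sum_dotProduct_mulVec {ι : Type*} [Fintype ι] (X A : Mat p)
    (b : OrthonormalBasis ι ℝ (EuclideanSpace ℝ (Fin p))) :
    frob X A = ∑ i, (X *ᵥ ⇑(b i)) ⬝ᵥ (A *ᵥ ⇑(b i)) := by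
  rw [frob_eq_trace, trace_eq_sum_dotProduct_mulVec _ b]
  simp only [← mulVec_mulVec, dotProduct_mulVec, vecMul_transpose]

theorem l2_mulVec_eigenvectorBasis (X : Mat p) (i : Fin p) :
    l2 (X *ᵥ ⇑((isHermitian_transpose_mul_self X).eigenvectorBasis i))
      = √((isHermitian_transpose_mul_self X).eigenvalues i) := by
  set hX := isHermitian_transpose_mul_self X
  set b := ⇑(hX.eigenvectorBasis i)
  have hXb : (X *ᵥ b) ⬝ᵥ (X *ᵥ b) = b ⬝ᵥ (Xᵀ * X) *ᵥ b := by
    rw [← mulVec_mulVec, dotProduct_mulVec b, vecMul_transpose]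
  rw [← Real.sqrt_sq (l2_nonneg _), l2_sq, hXb, hX.mulVec_eigenvectorBasis, dotProduct_smul,
    ← l2_sq, l2_orthonormalBasis, one_pow, smul_eq_mul, mul_one]

theorem nuclearNorm_eq_sum_l2_mulVec (X : Mat p) :
    nuclearNorm X
      = ∑ i, l2 (X *ᵥ ⇑((isHermitian_transpose_mul_self X).eigenvectorBasis i)) :=
  sum_congr rfl fun i _ => (l2_mulVec_eigenvectorBasis X i).symm

theorem nuclearNorm_nonneg (X : Mat p) : 0 ≤ nuclearNorm X :=
  sum_nonneg fun _ _ => Real.sqrt_nonneg _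

theorem frob_self_le_nuclearNorm_sq (X : Mat p) : frob X X ≤ nuclearNorm X ^ 2 := by
  rw [frob_eq_sum_dotProduct_mulVec X X (isHermitian_transpose_mul_self X).eigenvectorBasis,
    nuclearNorm_eq_sum_l2_mulVec]
  simp only [← l2_sq]
  exact sum_sq_le_sq_sum_of_nonneg fun _ _ => l2_nonneg _

theorem frob_le_mul_nuclearNorm (X A : Mat p) {c : ℝ}
    (hA : ∀ u : Vec p, l2 u = 1 → l2 (A *ᵥ u) ≤ c) : frob X A ≤ c * nuclearNorm X := by
  set b := (isHermitian_transpose_mul_self X).eigenvectorBasis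
  rw [frob_eq_sum_dotProduct_mulVec X A b, nuclearNorm_eq_sum_l2_mulVec, mul_sum]
  refine sum_le_sum fun i _ => ?_
  calc (X *ᵥ ⇑(b i)) ⬝ᵥ (A *ᵥ ⇑(b i)) ≤ l2 (X *ᵥ ⇑(b i)) * l2 (A *ᵥ ⇑(b i)) :=
        dotProduct_le_l2_mul_l2 _ _
    _ ≤ l2 (X *ᵥ ⇑(b i)) * c :=
        mul_le_mul_of_nonneg_left (hA _ (l2_orthonormalBasis b i)) (l2_nonneg _)
    _ = c * l2 (X *ᵥ ⇑(b i)) := mul_comm _ _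

theorem bddAbove_opNorm (A : Mat p) :
    BddAbove {t | ∃ u v : Vec p, l2 u ≤ 1 ∧ l2 v ≤ 1 ∧ t = dotp (A *ᵥ u) v} := by
  refine ⟨‖toEuclideanCLM (𝕜 := ℝ) A‖, ?_⟩
  rintro t ⟨u, v, hu, hv, rfl⟩
  have hAu : l2 (A *ᵥ u) ≤ ‖toEuclideanCLM (𝕜 := ℝ) A‖ := by
    rw [l2_eq_norm, ← toEuclideanCLM_toLp]
    refine (ContinuousLinearMap.le_opNorm _ _).trans ?_
    rw [← l2_eq_norm]
    exact mul_le_of_le_one_right (norm_nonneg _) hu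
  calc dotp (A *ᵥ u) v ≤ l2 (A *ᵥ u) * l2 v := dotProduct_le_l2_mul_l2 _ _
    _ ≤ l2 (A *ᵥ u) := mul_le_of_le_one_right (l2_nonneg _) hv
    _ ≤ _ := hAu

theorem dotp_mulVec_le_opNorm (A : Mat p) {u v : Vec p} (hu : l2 u ≤ 1) (hv : l2 v ≤ 1) :
    dotp (A *ᵥ u) v ≤ opNorm A :=
  le_csSup (bddAbove_opNorm A) ⟨u, v, hu, hv, rfl⟩

theorem opNorm_nonneg (A : Mat p) : 0 ≤ opNorm A := by
  simpa [dotp] using dotp_mulVec_le_opNorm A (l2_zero.trans_le zero_le_one)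
    (l2_zero.trans_le zero_le_one)

/-- Tested against `v = A x / ‖A x‖`, the supremum defining `opNorm A` sees `‖A x‖ / ‖x‖`. -/
theorem l2_mulVec_le_opNorm (A : Mat p) (x : Vec p) : l2 (A *ᵥ x) ≤ opNorm A * l2 x := by
  rcases eq_or_ne x 0 with rfl | hx
  · simp [l2_zero]
  set s := l2 x
  set t := l2 (A *ᵥ x)
  have hs : 0 < s := l2_pos hx
  have hu : l2 (s⁻¹ • x) ≤ 1 := by
    rw [l2_smul, abs_inv, abs_of_pos hs, inv_mul_cancel₀ hs.ne']
  have hv : l2 (t⁻¹ • (A *ᵥ x)) ≤ 1 := by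
    rw [l2_smul, abs_inv, abs_of_nonneg (l2_nonneg _)]
    exact inv_mul_le_one_of_le₀ le_rfl (l2_nonneg _)
  have key := dotp_mulVec_le_opNorm A hu hv
  rw [dotp_eq_dotProduct, mulVec_smul, smul_dotProduct, dotProduct_smul, ← l2_sq, smul_eq_mul,
    smul_eq_mul] at key
  have ht : t⁻¹ * t ^ 2 = t := by
    rcases eq_or_ne t 0 with h | h
    · simp [h]
    · field_simp
  rw [ht, inv_mul_le_iff₀ hs] at key
  linarith

theorem l2_mulVec_add_opNorm_smul_vecMulVec_le {S : Mat p} {v u : Vec p} (hS : S.IsSymm)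
    (hSv : S *ᵥ v = 0) (hv : v ⬝ᵥ v = 1) (hu : l2 u = 1) :
    l2 ((S + opNorm S • vecMulVec v v) *ᵥ u) ≤ opNorm S := by
  set σ := opNorm S
  set c := v ⬝ᵥ u
  have hSu : S *ᵥ u = S *ᵥ (u - c • v) := by rw [mulVec_sub, mulVec_smul, hSv, smul_zero, sub_zero]
  have hSu_v : (S *ᵥ u) ⬝ᵥ v = 0 := by
    rw [dotProduct_comm, dotProduct_mulVec, ← mulVec_transpose, hS.eq, hSv, zero_dotProduct]
  have hw : (u - c • v) ⬝ᵥ (u - c • v) = 1 - c ^ 2 := by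
    simp only [dotProduct_sub, sub_dotProduct, dotProduct_smul, smul_dotProduct, smul_eq_mul,
      ← l2_sq u, hu, hv, dotProduct_comm u v]
    ring
  have hSu_sq : (S *ᵥ u) ⬝ᵥ (S *ᵥ u) ≤ σ ^ 2 * (1 - c ^ 2) := by
    rw [hSu, ← l2_sq, ← hw, ← l2_sq, ← mul_pow]
    exact pow_le_pow_left₀ (l2_nonneg _) (l2_mulVec_le_opNorm S _) 2
  have hAu : (S + σ • vecMulVec v v) *ᵥ u = S *ᵥ u + (σ * c) • v := by
    rw [add_mulVec, smul_mulVec, vecMulVec_mulVec, op_smul_eq_smul, smul_smul]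
  refine l2_le_of_dotProduct_self_le (opNorm_nonneg S) ?_
  rw [hAu]
  simp only [dotProduct_add, add_dotProduct, dotProduct_smul, smul_dotProduct, smul_eq_mul, hSu_v,
    dotProduct_comm v (S *ᵥ u), hv]
  linarith

end

/-- geometric facts used in the sparse PCA proof. -/
theorem sparse_pca_geometry {p : ℕ} (v1 : Vec p) (hv1 : l2 v1 = 1)
    (Phat : Mat p) (hP : nuclearNorm Phat ≤ 1) :
    (frobNorm (Phat - Matrix.vecMulVec v1 v1)) ^ 2
        ≤ 2 * (1 - frob Phat (Matrix.vecMulVec v1 v1)) ∧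
    frob Phat (Matrix.vecMulVec v1 v1) ≤ 1 ∧
    ∀ (S2 : Mat p) (σ2 : ℝ), S2.PosSemidef → S2.mulVec v1 = 0 → opNorm S2 = σ2 →
      frob Phat S2 ≤ σ2 * (1 - frob Phat (Matrix.vecMulVec v1 v1)) := by
  have hv : v1 ⬝ᵥ v1 = 1 := by rw [← l2_sq, hv1, one_pow]
  have hP1 : frob Phat (vecMulVec v1 v1) ≤ 1 * nuclearNorm Phat :=
    frob_le_mul_nuclearNorm _ _ fun u hu =>
      (l2_vecMulVec_mulVec_le v1 v1 u).trans_eq (by rw [hv1, hu, one_mul, one_mul])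
  refine ⟨?_, by linarith, ?_⟩
  · have hPP : frob Phat Phat ≤ 1 :=
      (frob_self_le_nuclearNorm_sq Phat).trans (pow_le_one₀ (nuclearNorm_nonneg Phat) hP)
    rw [frobNorm_sub_sq, frob_vecMulVec_self, hv]
    linarith
  · rintro S2 _ hS hSv rfl
    have hA := frob_le_mul_nuclearNorm Phat _ fun u hu =>
      l2_mulVec_add_opNorm_smul_vecMulVec_le (isHermitian_iff_isSymm.mp hS.1) hSv hv hu
    rw [frob_add_right, frob_smul_right] at hA
    linarith [mul_le_of_le_one_right (opNorm_nonneg S2) hP]
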